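/- A sequence (ηⁿ)_{n∈ℕ} ⊆ 𝒮 is a Cauchy sequence in (𝒮, d_𝒮) if and only if all four of the following hold: (i) for each x ∈ L⁻¹ℤ, the sequence (ηⁿ(x))_{n∈ℕ} is a Cauchy sequence in ℓ¹, i.e. ∑_{k=0}^∞ |ηⁿ_k(x) − η^m_k(x)| → 0 as n, m → ∞; (ii) sup_{n∈ℕ} |||ηⁿ|||_𝒮 < ∞; (iii) for every ε > 0 there exists R > 0 such that sup_{n∈ℕ} ∑_{x∈L⁻¹ℤ, |x|≥R} ‖ηⁿ(x)‖_{ℓ¹}/(1+|x|)² ≤ ε; (iv) for each x ∈ L⁻¹ℤ there exists J ∈ ℕ₀ such that ηⁿ_k(x) = 0 for all k ≥ J and all n ∈ ℕ. -/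

import Mathlib

open scoped ENNReal NNReal BigOperators

namespace SpatialMuller

/-- Configurations: `ξ n k` is the number of particles carrying `k` mutations
living at the deme with position `n / L`. -/
abbrev Config : Type := ℤ → ℕ → ℕ

/-- The real position `n / L` of the deme indexed by `n : ℤ`. -/
noncomputable def pos (L : ℝ) (n : ℤ) : ℝ := (n : ℝ) / L

/-- The weight `(1 + |x|) ^ 2` at the deme indexed by `n`, as an extended real. -/
noncomputable def w (L : ℝ) (n : ℤ) : ℝ≥0∞ := ENNReal.ofReal ((1 + |pos L n|) ^ 2)

lemma w_ne_zero (L : ℝ) (n : ℤ) : w L n ≠ 0 := by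
  have h : (0 : ℝ) < (1 + |pos L n|) ^ 2 := by positivity
  simp only [w, ne_eq, ENNReal.ofReal_eq_zero, not_le]
  exact h

lemma w_ne_top (L : ℝ) (n : ℤ) : w L n ≠ ∞ := ENNReal.ofReal_ne_top

/-- `‖ξ(x)‖_{ℓ¹} ∈ [0,∞]`: the total number of particles at the deme indexed by `n`. -/
noncomputable def cellMass (ξ : Config) (n : ℤ) : ℝ≥0∞ := ∑' k : ℕ, (ξ n k : ℝ≥0∞)

/-- `|||ξ|||_𝒮`: the total weighted mass of the configuration `ξ`. -/
noncomputable def tmass (L : ℝ) (ξ : Config) : ℝ≥0∞ := ∑' n : ℤ, cellMass ξ n / w L n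

/-- The `ℓ¹` distance between the contents of the deme indexed by `n`. -/
noncomputable def cellDist (ξ ζ : Config) (n : ℤ) : ℝ≥0∞ :=
  ∑' k : ℕ, (((ξ n k : ℤ) - (ζ n k : ℤ)).natAbs : ℝ≥0∞)

/-- The metric `d_𝒮`, with values in `[0,∞]`. -/
noncomputable def dS (L : ℝ) (ξ ζ : Config) : ℝ≥0∞ := ∑' n : ℤ, cellDist ξ ζ n / w L n

/-- The state space `𝒮` of configurations with finite total weighted mass. -/
def SpaceS (L : ℝ) : Type := {ξ : Config // tmass L ξ ≠ ∞}

/-!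
Cauchy ⇒ (i)–(iv): `d_𝒮` dominates each cell distance up to the weight `(1+|x|)²`, which gives
(i). Total and tail masses are `1`-Lipschitz for `d_𝒮`, and a cell distance below `1` forces
equal cell contents because these are integers; so from some `N` on, the quantities in (ii)–(iv)
are controlled by those of `η^N`, and the finitely many `n < N` are handled one at a time.

(i) ∧ (iii) ⇒ Cauchy: the demes with `|x| ≥ R` contribute to `d_𝒮` at most the tails of both
configurations, and the finitely many demes with `|x| < R` are handled by (i).
-/

open Filter Topology Function

def IsCauchyDist (d : ℕ → ℕ → ℝ≥0∞) : Prop :=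
  ∀ ε : ℝ, 0 < ε → ∃ N : ℕ, ∀ i j : ℕ, N ≤ i → N ≤ j → d i j < ENNReal.ofReal ε

theorem isCauchyDist_iff_tendsto {d : ℕ → ℕ → ℝ≥0∞} :
    IsCauchyDist d ↔ Tendsto (uncurry d) atTop (𝓝 0) := by
  rw [← prod_atTop_atTop_eq, (atTop_basis.prod_self).tendsto_iff ENNReal.nhds_zero_basis]
  simp only [true_and, Set.mem_prod, Set.mem_Ici, Set.mem_Iio, and_imp, Prod.forall,
    uncurry_apply_pair]
  constructor
  · intro h a ha
    obtain ⟨r, -, hr0, hra⟩ := ENNReal.lt_iff_exists_real_btwn.1 ha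
    obtain ⟨N, hN⟩ := h r (ENNReal.ofReal_pos.1 hr0)
    exact ⟨N, fun i j hi hj => (hN i j hi hj).trans hra⟩
  · intro h ε hε
    exact h _ (ENNReal.ofReal_pos.2 hε)

theorem IsCauchyDist.of_le_const_mul {d d' : ℕ → ℕ → ℝ≥0∞} (h : IsCauchyDist d) {C : ℝ≥0∞}
    (hC : C ≠ ∞) (hle : ∀ i j, d' i j ≤ C * d i j) : IsCauchyDist d' := by
  rw [isCauchyDist_iff_tendsto] at h ⊢
  have hCd := ENNReal.Tendsto.const_mul h (Or.inr hC)
  rw [mul_zero] at hCd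
  exact tendsto_of_tendsto_of_tendsto_of_le_of_le tendsto_const_nhds hCd (fun _ => zero_le)
    fun p => hle p.1 p.2

theorem eventually_forall_of_forall_lt_of_forall_ge {α : Type*} {l : Filter α} {p : ℕ → α → Prop}
    (N : ℕ) (hlt : ∀ n < N, ∀ᶠ a in l, p n a) (hge : ∀ᶠ a in l, ∀ n, N ≤ n → p n a) :
    ∀ᶠ a in l, ∀ n, p n a := by
  filter_upwards [(eventually_all_finset (Finset.range N)).2 fun n hn =>
    hlt n (Finset.mem_range.1 hn), hge] with a hlt hge n
  exact (lt_or_ge n N).elim (fun h => hlt n (Finset.mem_range.2 h)) (hge n)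

theorem eventually_forall_ge_eq_zero_of_tsum_ne_top (a : ℕ → ℕ)
    (h : ∑' k, (a k : ℝ≥0∞) ≠ ∞) : ∀ᶠ J in atTop, ∀ k, J ≤ k → a k = 0 := by
  refine eventually_forall_ge_atTop.2 ?_
  rw [← Nat.cofinite_eq_atTop]
  filter_upwards [(ENNReal.finite_const_le_of_tsum_ne_top h one_ne_zero).compl_mem_cofinite]
    with k hk
  simpa using hk

theorem ENNReal.le_mul_tsum_div {ι : Type*} (f g : ι → ℝ≥0∞) {i : ι} (hg0 : g i ≠ 0)
    (hg : g i ≠ ∞) : f i ≤ g i * ∑' j, f j / g j :=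
  calc f i = g i * (f i / g i) := (ENNReal.mul_div_cancel hg0 hg).symm
    _ ≤ g i * ∑' j, f j / g j := by gcongr; exact ENNReal.le_tsum i

theorem tendsto_abs_pos_cofinite {L : ℝ} (hL : L ≠ 0) :
    Tendsto (fun x : ℤ => |pos L x|) cofinite atTop := by
  have h := (tendsto_norm_cocompact_atTop.comp Int.tendsto_coe_cofinite).atTop_div_const
    (abs_pos.2 hL)
  refine h.congr fun x => ?_
  simp [pos, abs_div]

theorem exists_finset_forall_not_mem_le_abs_pos {L : ℝ} (hL : L ≠ 0) (R : ℝ) :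
    ∃ s : Finset ℤ, ∀ x ∉ s, R ≤ |pos L x| := by
  have hfin := eventually_cofinite.1 ((tendsto_abs_pos_cofinite hL).eventually_ge_atTop R)
  exact ⟨hfin.toFinset, fun x hx => by simpa using hx⟩

noncomputable def tailMass (L R : ℝ) (ξ : Config) : ℝ≥0∞ :=
  ∑' x : ℤ, if R ≤ |pos L x| then cellMass ξ x / w L x else 0

variable {L : ℝ}

theorem tailMass_eq_tsum_subtype (R : ℝ) (ξ : Config) :
    tailMass L R ξ = ∑' x : {x : ℤ | R ≤ |pos L x|}, cellMass ξ x / w L x := by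
  rw [tsum_subtype {x : ℤ | R ≤ |pos L x|} fun x => cellMass ξ x / w L x, tailMass]
  simp [Set.indicator_apply]

theorem cellDist_le_cellMass_add (ξ ζ : Config) (x : ℤ) :
    cellDist ξ ζ x ≤ cellMass ξ x + cellMass ζ x := by
  rw [cellMass, cellMass, ← ENNReal.tsum_add]
  refine ENNReal.tsum_le_tsum fun k => ?_
  exact_mod_cast (by omega : ((ξ x k : ℤ) - ζ x k).natAbs ≤ ξ x k + ζ x k)

theorem cellMass_le_cellMass_add_cellDist (ξ ζ : Config) (x : ℤ) :
    cellMass ξ x ≤ cellMass ζ x + cellDist ξ ζ x := by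
  rw [cellMass, cellMass, cellDist, ← ENNReal.tsum_add]
  refine ENNReal.tsum_le_tsum fun k => ?_
  exact_mod_cast (by omega : ξ x k ≤ ζ x k + ((ξ x k : ℤ) - ζ x k).natAbs)

theorem eq_of_cellDist_lt_one {ξ ζ : Config} {x : ℤ} (h : cellDist ξ ζ x < 1) : ξ x = ζ x := by
  funext k
  have hk : ((ξ x k : ℤ) - ζ x k).natAbs < 1 := by
    exact_mod_cast (ENNReal.le_tsum k).trans_lt h
  omega

theorem tmass_le_tmass_add_dS (ξ ζ : Config) : tmass L ξ ≤ tmass L ζ + dS L ξ ζ := by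
  rw [tmass, tmass, dS, ← ENNReal.tsum_add]
  refine ENNReal.tsum_le_tsum fun x => ?_
  rw [← ENNReal.add_div]
  exact ENNReal.div_le_div_right (cellMass_le_cellMass_add_cellDist ξ ζ x) _

theorem tailMass_le_tailMass_add_dS (R : ℝ) (ξ ζ : Config) :
    tailMass L R ξ ≤ tailMass L R ζ + dS L ξ ζ := by
  rw [tailMass, tailMass, dS, ← ENNReal.tsum_add]
  refine ENNReal.tsum_le_tsum fun x => ?_
  split_ifs
  · rw [← ENNReal.add_div]
    exact ENNReal.div_le_div_right (cellMass_le_cellMass_add_cellDist ξ ζ x) _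
  · exact zero_le

theorem cellDist_le_w_mul_dS (ξ ζ : Config) (x : ℤ) : cellDist ξ ζ x ≤ w L x * dS L ξ ζ :=
  ENNReal.le_mul_tsum_div (cellDist ξ ζ) (w L) (w_ne_zero L x) (w_ne_top L x)

theorem cellMass_ne_top {ξ : Config} (hξ : tmass L ξ ≠ ∞) (x : ℤ) : cellMass ξ x ≠ ∞ :=
  ne_top_of_le_ne_top (ENNReal.mul_ne_top (w_ne_top L x) hξ)
    (ENNReal.le_mul_tsum_div (cellMass ξ) (w L) (w_ne_zero L x) (w_ne_top L x))

theorem eventually_tailMass_le {ξ : Config} (hξ : tmass L ξ ≠ ∞) {ε : ℝ≥0∞} (hε : 0 < ε) :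
    ∀ᶠ R in atTop, tailMass L R ξ ≤ ε := by
  obtain ⟨s, hs⟩ := ((ENNReal.tendsto_tsum_compl_atTop_zero hξ).eventually_lt_const hε).exists
  filter_upwards [(eventually_all_finset s).2 fun x _ => eventually_gt_atTop |pos L x|]
    with R hR
  rw [tailMass_eq_tsum_subtype]
  refine le_trans ?_ hs.le
  exact ENNReal.tsum_mono_subtype (fun x => cellMass ξ x / w L x) (t := (↑s : Set ℤ)ᶜ)
    fun x hx hxs => (hR x hxs).not_ge hx

theorem dS_le_sum_add_tailMass {s : Finset ℤ} {R : ℝ} (hs : ∀ x ∉ s, R ≤ |pos L x|)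
    (ξ ζ : Config) :
    dS L ξ ζ ≤ ∑ x ∈ s, cellDist ξ ζ x / w L x + (tailMass L R ξ + tailMass L R ζ) := by
  rw [dS, ← ENNReal.sum_add_tsum_compl s]
  gcongr
  calc ∑' x : ↥(↑s : Set ℤ)ᶜ, cellDist ξ ζ x / w L x
      ≤ ∑' x : ↥(↑s : Set ℤ)ᶜ, (cellMass ξ x / w L x + cellMass ζ x / w L x) :=
        ENNReal.tsum_le_tsum fun x => by
          rw [← ENNReal.add_div]
          exact ENNReal.div_le_div_right (cellDist_le_cellMass_add ξ ζ x) _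
    _ = ∑' x : ↥(↑s : Set ℤ)ᶜ, cellMass ξ x / w L x + ∑' x : ↥(↑s : Set ℤ)ᶜ, cellMass ζ x / w L x :=
        ENNReal.tsum_add
    _ ≤ tailMass L R ξ + tailMass L R ζ := by
        rw [tailMass_eq_tsum_subtype, tailMass_eq_tsum_subtype]
        have hsub : (↑s : Set ℤ)ᶜ ⊆ {x | R ≤ |pos L x|} := fun x hx => hs x hx
        exact add_le_add (ENNReal.tsum_mono_subtype (fun x => cellMass ξ x / w L x) hsub)
          (ENNReal.tsum_mono_subtype (fun x => cellMass ζ x / w L x) hsub)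

variable {ξ : ℕ → Config}

theorem iSup_tmass_ne_top (hξ : ∀ n, tmass L (ξ n) ≠ ∞)
    (hC : IsCauchyDist fun i j => dS L (ξ i) (ξ j)) : ⨆ n, tmass L (ξ n) ≠ ∞ := by
  obtain ⟨N, hN⟩ := hC 1 one_pos
  have eventually_le_coe {a : ℝ≥0∞} (ha : a ≠ ∞) : ∀ᶠ C : ℝ≥0 in atTop, a ≤ C :=
    (eventually_ge_atTop a.toNNReal).mono fun C hC => by
      rwa [← ENNReal.coe_toNNReal ha, ENNReal.coe_le_coe]
  have hbound : ∀ᶠ C : ℝ≥0 in atTop, ∀ n, tmass L (ξ n) ≤ C := by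
    refine eventually_forall_of_forall_lt_of_forall_ge N (fun n _ => eventually_le_coe (hξ n)) ?_
    filter_upwards [eventually_le_coe (ENNReal.add_ne_top.2 ⟨hξ N, ENNReal.one_ne_top⟩)]
      with C hC n hn
    calc tmass L (ξ n) ≤ tmass L (ξ N) + dS L (ξ n) (ξ N) := tmass_le_tmass_add_dS _ _
      _ ≤ tmass L (ξ N) + 1 := by
          gcongr; simpa using (hN n N hn le_rfl).le
      _ ≤ C := hC
  obtain ⟨C, hC⟩ := hbound.exists
  exact ne_top_of_le_ne_top ENNReal.coe_ne_top (iSup_le hC)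

theorem exists_forall_tailMass_le (hξ : ∀ n, tmass L (ξ n) ≠ ∞)
    (hC : IsCauchyDist fun i j => dS L (ξ i) (ξ j)) (ε : ℝ) (hε : 0 < ε) :
    ∃ R : ℝ, 0 < R ∧ ∀ n, tailMass L R (ξ n) ≤ ENNReal.ofReal ε := by
  obtain ⟨N, hN⟩ := hC (ε / 2) (half_pos hε)
  have htail : ∀ᶠ R in atTop, ∀ n, tailMass L R (ξ n) ≤ ENNReal.ofReal ε := by
    refine eventually_forall_of_forall_lt_of_forall_ge N
      (fun n _ => eventually_tailMass_le (hξ n) (ENNReal.ofReal_pos.2 hε)) ?_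
    filter_upwards [eventually_tailMass_le (hξ N) (ENNReal.ofReal_pos.2 (half_pos hε))]
      with R hR n hn
    calc tailMass L R (ξ n) ≤ tailMass L R (ξ N) + dS L (ξ n) (ξ N) :=
          tailMass_le_tailMass_add_dS _ _ _
      _ ≤ ENNReal.ofReal (ε / 2) + ENNReal.ofReal (ε / 2) :=
          add_le_add hR (hN n N hn le_rfl).le
      _ = ENNReal.ofReal ε := by
          rw [← ENNReal.ofReal_add (by positivity) (by positivity), add_halves]
  exact ((eventually_gt_atTop 0).and htail).exists

theorem exists_forall_ge_eq_zero (hξ : ∀ n, tmass L (ξ n) ≠ ∞) {x : ℤ}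
    (hcell : IsCauchyDist fun i j => cellDist (ξ i) (ξ j) x) :
    ∃ J : ℕ, ∀ n k, J ≤ k → ξ n x k = 0 := by
  obtain ⟨N, hN⟩ := hcell 1 one_pos
  have hstable : ∀ n, N ≤ n → ξ n x = ξ N x := fun n hn =>
    eq_of_cellDist_lt_one (by simpa using hN n N hn le_rfl)
  have hsupp (n : ℕ) := eventually_forall_ge_eq_zero_of_tsum_ne_top _ (cellMass_ne_top (hξ n) x)
  refine (eventually_forall_of_forall_lt_of_forall_ge N (fun n _ => hsupp n) ?_).exists
  filter_upwards [hsupp N] with J hJ n hn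
  rwa [hstable n hn]

theorem IsCauchyDist.dS_of_cellDist_of_tailMass (hL : L ≠ 0)
    (hcell : ∀ x, IsCauchyDist fun i j => cellDist (ξ i) (ξ j) x)
    (htail : ∀ ε : ℝ, 0 < ε → ∃ R : ℝ, ∀ n, tailMass L R (ξ n) ≤ ENNReal.ofReal ε) :
    IsCauchyDist fun i j => dS L (ξ i) (ξ j) := by
  intro ε hε
  obtain ⟨R, hR⟩ := htail (ε / 4) (by positivity)
  obtain ⟨s, hs⟩ := exists_finset_forall_not_mem_le_abs_pos hL R
  have hnear : IsCauchyDist fun i j => ∑ x ∈ s, cellDist (ξ i) (ξ j) x / w L x := by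
    have h := tendsto_finsetSum s fun x _ =>
      ENNReal.Tendsto.div_const (isCauchyDist_iff_tendsto.1 (hcell x)) (Or.inr (w_ne_zero L x))
    simp only [ENNReal.zero_div, Finset.sum_const_zero] at h
    exact isCauchyDist_iff_tendsto.2 h
  obtain ⟨N, hN⟩ := hnear (ε / 2) (half_pos hε)
  refine ⟨N, fun i j hi hj => ?_⟩
  calc dS L (ξ i) (ξ j)
      ≤ ∑ x ∈ s, cellDist (ξ i) (ξ j) x / w L x + (tailMass L R (ξ i) + tailMass L R (ξ j)) :=
        dS_le_sum_add_tailMass hs _ _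
    _ < ENNReal.ofReal (ε / 2) + (ENNReal.ofReal (ε / 4) + ENNReal.ofReal (ε / 4)) :=
        have htails := add_le_add (hR i) (hR j)
        ENNReal.add_lt_add_of_lt_of_le (ne_top_of_le_ne_top (by finiteness) htails)
          (hN i j hi hj) htails
    _ = ENNReal.ofReal ε := by
        rw [← ENNReal.ofReal_add (by positivity) (by positivity),
          ← ENNReal.ofReal_add (by positivity) (by positivity)]
        ring_nf

/-- A sequence `(ηⁿ) ⊆ 𝒮` is Cauchy for `d_𝒮` if and only if:
(i) for each deme `x` the sequence `(ηⁿ(x))` is Cauchy in `ℓ¹`;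
(ii) `sup_n |||ηⁿ|||_𝒮 < ∞`;
(iii) for every `ε > 0` there is `R > 0` with
`sup_n ∑_{|x|≥R} ‖ηⁿ(x)‖_{ℓ¹}/(1+|x|)² ≤ ε`;
(iv) for each deme `x` there is `J` with `ηⁿ_k(x) = 0` for all `k ≥ J` and all `n`. -/
theorem statement3 (L : ℝ) (hL : 0 < L) (η : ℕ → SpaceS L) :
    (∀ ε : ℝ, 0 < ε → ∃ N : ℕ, ∀ i j : ℕ, N ≤ i → N ≤ j →
        dS L (η i).1 (η j).1 < ENNReal.ofReal ε) ↔
      ((∀ x : ℤ, ∀ ε : ℝ, 0 < ε → ∃ N : ℕ, ∀ i j : ℕ, N ≤ i → N ≤ j →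
          cellDist (η i).1 (η j).1 x < ENNReal.ofReal ε) ∧
        (⨆ n : ℕ, tmass L (η n).1) ≠ ∞ ∧
        (∀ ε : ℝ, 0 < ε → ∃ R : ℝ, 0 < R ∧ ∀ n : ℕ,
          (∑' x : ℤ, if R ≤ |pos L x| then cellMass (η n).1 x / w L x else 0) ≤
            ENNReal.ofReal ε) ∧
        (∀ x : ℤ, ∃ J : ℕ, ∀ n : ℕ, ∀ k : ℕ, J ≤ k → (η n).1 x k = 0)) := by
  have hη (n : ℕ) : tmass L (η n).1 ≠ ∞ := (η n).2
  constructor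
  · intro hC
    have hcell (x : ℤ) : IsCauchyDist fun i j => cellDist (η i).1 (η j).1 x :=
      IsCauchyDist.of_le_const_mul hC (w_ne_top L x) fun i j => cellDist_le_w_mul_dS _ _ x
    exact ⟨hcell, iSup_tmass_ne_top hη hC, exists_forall_tailMass_le hη hC,
      fun x => exists_forall_ge_eq_zero hη (hcell x)⟩
  · rintro ⟨hcell, -, htail, -⟩
    exact IsCauchyDist.dS_of_cellDist_of_tailMass hL.ne' hcell
      fun ε hε => (htail ε hε).imp fun _ hR => hR.2

end SpatialMuller
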